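/- arXiv:2103.12330 — 2 statements merged into one kernel-verified Lean document; each statement's English description precedes it below -/
import Mathlib

section
/- Let $q$ be a prime, $l \ge 1$, $c'$ an integer with $\gcd(c', q) = 1$, and $n, m$ integers with $\gcd(m, q) = 1$. Then the Kloosterman sum $S(nq, m, c'q^{l+1}) = 0$. -/
/-!
Write `c = c' q^(l+1) = d q` with `d = c' q^l`, so `q ∣ d` as `l ≥ 1`. In `ZMod c` the element
`z = d` satisfies `z² = 0`, `(n q) z = 0` and `q z = 0`, so `1 - t z` is a unit with inverse
`1 + t z`. Substituting `u ↦ u (1 - t z)` in the Kloosterman sum multiplies the term of `u` by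
`ζ_u ^ t`, where `ζ_u = ψ (m u⁻¹ z)` is a `q`-th root of unity, nontrivial because `q ∤ m`.
Averaging over `t = 0, …, q - 1` kills every term.
-/

open Finset

noncomputable def e (t : ℝ) : ℂ := Complex.exp (2 * Real.pi * Complex.I * t)

/-- Kloosterman sum `S(a,b,c)`, written as a sum over pairs `(x,y)` with `x y ≡ 1 (mod c)`. -/
noncomputable def kloos (a b : ℤ) (c : ℕ) : ℂ :=
  ∑ x ∈ Finset.range c, ∑ y ∈ Finset.range c,
    if (x * y) % c = 1 % c then e (((a * x + b * y : ℤ) : ℝ) / c) else 0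

theorem ZMod.sum_val_eq_sum_range {M : Type*} [AddCommMonoid M] (c : ℕ) [NeZero c]
    (f : ℕ → M) : ∑ x : ZMod c, f x.val = ∑ x ∈ range c, f x := by
  refine sum_nbij ZMod.val (fun x _ => mem_range.2 (ZMod.val_lt x))
    (fun x _ y _ h => ZMod.val_injective c h) (fun x hx => ?_) (fun _ _ => rfl)
  exact ⟨x, mem_univ _, ZMod.val_cast_of_lt (mem_range.1 hx)⟩

theorem sum_units_eq_sum_sum_ite {R M : Type*} [CommMonoid R] [Fintype R] [DecidableEq R]
    [AddCommMonoid M] (g : R → R → M) :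
    ∑ u : Rˣ, g u ↑u⁻¹ = ∑ x : R, ∑ y : R, if x * y = 1 then g x y else 0 := by
  rw [← Fintype.sum_prod_type', ← sum_filter]
  refine sum_nbij' (fun u => (u, ↑u⁻¹))
    (fun p => if h : p.1 * p.2 = 1 then ⟨p.1, p.2, h, by rw [mul_comm, h]⟩ else 1)
    (by simp) (by simp) (by simp) (fun p hp => ?_) (fun _ _ => rfl)
  simp only [mem_filter, mem_univ, true_and] at hp
  simp [hp]

section Kloosterman

variable {R : Type*} [CommRing R] [Fintype Rˣ]

def kloostermanSum {M : Type*} [Semiring M] (ψ : AddChar R M) (a b : R) : M :=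
  ∑ u : Rˣ, ψ (a * u + b * ↑u⁻¹)

theorem kloostermanSum_eq_sum_mul {M : Type*} [Semiring M] (ψ : AddChar R M) {a z : R} (b : R)
    (hz : z * z = 0) (haz : a * z = 0) :
    kloostermanSum ψ a b = ∑ u : Rˣ, ψ (a * u + b * ↑u⁻¹) * ψ (b * ↑u⁻¹ * z) := by
  let w : Rˣ := ⟨1 - z, 1 + z, by linear_combination -hz, by linear_combination -hz⟩
  rw [kloostermanSum, ← Equiv.sum_comp (Equiv.mulRight w)]
  refine sum_congr rfl fun u _ => ?_
  rw [← AddChar.map_add_eq_mul]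
  congr 1
  simp only [Equiv.coe_mulRight, mul_inv_rev, Units.val_mul, Units.inv_mk, w]
  linear_combination -(u : R) * haz

theorem kloostermanSum_eq_zero {K : Type*} [Field K] [CharZero K] {ψ : AddChar R K}
    (hψ : Function.Injective ψ) {a b z : R} {N : ℕ} (hN : N ≠ 0) (hz : z * z = 0)
    (haz : a * z = 0) (hNz : (N : R) * z = 0) (hbz : b * z ≠ 0) :
    kloostermanSum ψ a b = 0 := by
  set ζ : Rˣ → K := fun u => ψ (b * ↑u⁻¹ * z)
  have hζ_pow (u : Rˣ) : ζ u ^ N = 1 := by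
    rw [← AddChar.map_nsmul_eq_pow, nsmul_eq_mul, mul_left_comm, hNz, mul_zero,
      AddChar.map_zero_eq_one]
  have hζ_ne_one (u : Rˣ) : ζ u ≠ 1 := by
    rw [ne_eq, ← AddChar.map_zero_eq_one ψ, hψ.eq_iff, mul_right_comm, u⁻¹.mul_left_eq_zero]
    exact hbz
  have hgeom (u : Rˣ) : ∑ t ∈ range N, ζ u ^ t = 0 := by
    rw [geom_sum_eq (hζ_ne_one u), hζ_pow, sub_self, zero_div]
  have hshift (t : ℕ) :
      kloostermanSum ψ a b = ∑ u : Rˣ, ψ (a * u + b * ↑u⁻¹) * ζ u ^ t := by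
    simp only [ζ, ← AddChar.map_nsmul_eq_pow, nsmul_eq_mul, mul_left_comm (t : R)]
    apply kloostermanSum_eq_sum_mul ψ b
    · linear_combination (t : R) ^ 2 * hz
    · linear_combination (t : R) * haz
  have hN_mul : (N : K) * kloostermanSum ψ a b = 0 := calc
    (N : K) * kloostermanSum ψ a b = ∑ t ∈ range N, kloostermanSum ψ a b := by simp
    _ = ∑ t ∈ range N, ∑ u : Rˣ, ψ (a * u + b * ↑u⁻¹) * ζ u ^ t :=
      sum_congr rfl fun t _ => hshift t
    _ = ∑ u : Rˣ, ψ (a * u + b * ↑u⁻¹) * ∑ t ∈ range N, ζ u ^ t := by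
      rw [sum_comm]
      simp only [mul_sum]
    _ = 0 := by simp [hgeom]
  exact (mul_eq_zero.1 hN_mul).resolve_left (Nat.cast_ne_zero.2 hN)

end Kloosterman

theorem e_intCast_div (c : ℕ) [NeZero c] (k : ℤ) :
    e ((k : ℝ) / c) = ZMod.stdAddChar (k : ZMod c) := by
  rw [ZMod.stdAddChar_coe, e]
  push_cast
  ring_nf

theorem kloos_eq_kloostermanSum (a b : ℤ) (c : ℕ) [NeZero c] :
    kloos a b c = kloostermanSum ZMod.stdAddChar (a : ZMod c) b := by
  rw [kloostermanSum, sum_units_eq_sum_sum_ite fun x y : ZMod c =>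
    ZMod.stdAddChar ((a : ZMod c) * x + (b : ZMod c) * y), kloos, ← ZMod.sum_val_eq_sum_range]
  refine sum_congr rfl fun x _ => ?_
  rw [← ZMod.sum_val_eq_sum_range]
  refine sum_congr rfl fun y _ => ?_
  simp only [← ZMod.natCast_eq_natCast_iff', e_intCast_div]
  push_cast
  simp only [ZMod.natCast_val, ZMod.cast_id', id]

theorem kloos_mul_eq_zero (n m : ℤ) {d q : ℕ} (hd : d ≠ 0) (hqd : q ∣ d)
    (hm : ¬ (q : ℤ) ∣ m) : kloos (n * q) m (d * q) = 0 := by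
  have hq : q ≠ 0 := by
    rintro rfl
    exact hd (Nat.eq_zero_of_zero_dvd hqd)
  have : NeZero (d * q) := ⟨mul_ne_zero hd hq⟩
  have hc : ((d * q : ℕ) : ZMod (d * q)) = 0 := ZMod.natCast_self _
  rw [kloos_eq_kloostermanSum]
  refine kloostermanSum_eq_zero ZMod.injective_stdAddChar (z := d) hq ?_ ?_ ?_ ?_
  · obtain ⟨k, rfl⟩ := hqd
    push_cast at hc ⊢
    linear_combination (k : ZMod (q * k * q)) * hc
  · push_cast at hc ⊢
    linear_combination (n : ZMod (d * q)) * hc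
  · push_cast at hc ⊢
    linear_combination hc
  · intro h
    rw [← Int.cast_natCast, ← Int.cast_mul, ZMod.intCast_zmod_eq_zero_iff_dvd, Nat.cast_mul,
      mul_comm m] at h
    exact hm (Int.dvd_of_mul_dvd_mul_left (by exact_mod_cast hd) h)

theorem stmt0 (q : ℕ) (hq : q.Prime) (l : ℕ) (hl : 1 ≤ l) (c' : ℕ)
    (hc' : Nat.Coprime c' q) (n m : ℤ) (hm : Int.gcd m q = 1) :
    kloos (n * q) m (c' * q ^ (l + 1)) = 0 := by
  have hc'0 : c' ≠ 0 := by
    rintro rfl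
    exact hq.ne_one (by simpa using hc')
  have hqm : ¬ (q : ℤ) ∣ m := fun h => by
    have hq1 : (q : ℤ) ∣ (1 : ℕ) := hm ▸ Int.dvd_coe_gcd h dvd_rfl
    exact hq.not_dvd_one (Int.natCast_dvd_natCast.1 hq1)
  rw [pow_succ, ← mul_assoc]
  exact kloos_mul_eq_zero n m (mul_ne_zero hc'0 (pow_ne_zero l hq.ne_zero))
    (dvd_mul_of_dvd_right (dvd_pow_self q (by omega)) c') hqm
end

section
/- For $x > 0$, the modified Bessel function satisfies the integral representation $K_0(x) = e^{-x} 2^{-1/2} \int_0^\infty e^{-ux} u^{-1/2} (1 + u/2)^{-1/2} du$. -/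
open Real Set MeasureTheory

/-!
Substitute `u = cosh t - 1`, so that `du = sinh t dt`. Since
`(cosh t - 1)(1 + (cosh t - 1)/2) = sinh² t / 2`, the factor `u^{-1/2} (1 + u/2)^{-1/2}` becomes
`√2 / sinh t`, which cancels the Jacobian, while `e^{-ux} = e^{x} e^{-x cosh t}`.
-/

theorem image_cosh_sub_one_Ioi : (fun t ↦ cosh t - 1) '' Ioi 0 = Ioi (0 : ℝ) := by
  ext u
  constructor
  · rintro ⟨t, ht, rfl⟩
    exact sub_pos.2 (one_lt_cosh.2 (ne_of_gt ht))
  · intro hu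
    have hu' : (1 : ℝ) < 1 + u := lt_add_of_pos_right 1 hu
    exact ⟨arcosh (1 + u), arcosh_pos hu', by simp [cosh_arcosh hu'.le]⟩

theorem integral_Ioi_eq_integral_Ioi_sinh_smul_comp_cosh_sub_one
    {E : Type*} [NormedAddCommGroup E] [NormedSpace ℝ E] (f : ℝ → E) :
    ∫ u in Ioi 0, f u = ∫ t in Ioi 0, sinh t • f (cosh t - 1) := by
  have hderiv : ∀ t ∈ Ioi (0 : ℝ), HasDerivWithinAt (fun t ↦ cosh t - 1) (sinh t) (Ioi 0) t :=
    fun t _ ↦ ((hasDerivAt_cosh t).sub_const 1).hasDerivWithinAt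
  have hinj : InjOn (fun t ↦ cosh t - 1) (Ioi (0 : ℝ)) := fun a ha b hb h ↦
    cosh_injOn (Ioi_subset_Ici_self ha) (Ioi_subset_Ici_self hb) (sub_left_injective h)
  conv_lhs => rw [← image_cosh_sub_one_Ioi]
  rw [integral_image_eq_integral_abs_deriv_smul measurableSet_Ioi hderiv hinj]
  refine setIntegral_congr_fun measurableSet_Ioi fun t ht ↦ ?_
  rw [abs_of_pos (sinh_pos_iff.2 ht)]

theorem sinh_mul_rpow_cosh_sub_one_mul_rpow {t : ℝ} (ht : 0 < t) :
    sinh t * ((cosh t - 1) ^ (-(1 / 2 : ℝ)) * (1 + (cosh t - 1) / 2) ^ (-(1 / 2 : ℝ))) = √2 := by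
  have hs : 0 < sinh t := sinh_pos_iff.2 ht
  have hc : 1 < cosh t := one_lt_cosh.2 (ne_of_gt ht)
  have hprod : (cosh t - 1) * (1 + (cosh t - 1) / 2) = sinh t ^ 2 / 2 := by
    linear_combination (cosh_sq_sub_sinh_sq t) / 2
  rw [← mul_rpow (by linarith) (by linarith), hprod, rpow_neg (by positivity), ← sqrt_eq_rpow,
    sqrt_div' _ zero_le_two, sqrt_sq hs.le]
  field_simp

theorem stmt8_general (x : ℝ) :
    (∫ t in Set.Ioi (0 : ℝ), Real.exp (-x * Real.cosh t))
      = Real.exp (-x) * (2 : ℝ) ^ (-(1 / 2 : ℝ)) *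
        ∫ u in Set.Ioi (0 : ℝ),
          Real.exp (-u * x) * u ^ (-(1 / 2 : ℝ)) * (1 + u / 2) ^ (-(1 / 2 : ℝ)) := by
  have hpoint : ∀ t ∈ Ioi (0 : ℝ),
      sinh t • (exp (-(cosh t - 1) * x) * (cosh t - 1) ^ (-(1 / 2 : ℝ)) *
        (1 + (cosh t - 1) / 2) ^ (-(1 / 2 : ℝ))) = (√2 * exp x) * exp (-x * cosh t) := by
    intro t ht
    have hexp : exp (-(cosh t - 1) * x) = exp x * exp (-x * cosh t) := by
      rw [← exp_add]; ring_nf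
    rw [smul_eq_mul, hexp, ← sinh_mul_rpow_cosh_sub_one_mul_rpow ht]
    ring
  have hconst : exp (-x) * (2 : ℝ) ^ (-(1 / 2 : ℝ)) * (√2 * exp x) = 1 := by
    rw [rpow_neg zero_le_two, ← sqrt_eq_rpow, exp_neg x]
    field_simp
  rw [integral_Ioi_eq_integral_Ioi_sinh_smul_comp_cosh_sub_one
      fun u ↦ exp (-u * x) * u ^ (-(1 / 2 : ℝ)) * (1 + u / 2) ^ (-(1 / 2 : ℝ)),
    setIntegral_congr_fun measurableSet_Ioi hpoint, integral_const_mul, ← mul_assoc, hconst,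
    one_mul]

/-- Integral representation `K₀(x) = e^{-x} 2^{-1/2} ∫_0^∞ e^{-ux} u^{-1/2} (1+u/2)^{-1/2} du`,
where `K₀(x) = ∫_0^∞ e^{-x cosh t} dt`. -/
theorem stmt8 (x : ℝ) (hx : 0 < x) :
    (∫ t in Set.Ioi (0 : ℝ), Real.exp (-x * Real.cosh t))
      = Real.exp (-x) * (2 : ℝ) ^ (-(1 / 2 : ℝ)) *
        ∫ u in Set.Ioi (0 : ℝ),
          Real.exp (-u * x) * u ^ (-(1 / 2 : ℝ)) * (1 + u / 2) ^ (-(1 / 2 : ℝ)) :=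
  stmt8_general x
end
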